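/- Fix q ∈ ℂ with q ≠ 0 and q not a root of unity, and p ∈ ℂ with p² = q. Let a,b,c,d,e,λ ∈ ℂ, n ∈ ℕ, and let P be a polynomial over ℂ of degree n with nonzero leading coefficient. If the function y(z) := P.eval(x(z)) satisfies (a·x(z)² + b·x(z) + c)·(𝔻(𝔻y))(z) + (d·x(z) + e)·(𝕊(𝔻y))(z) + λ·y(z) = 0 at every z ∈ ℂ∖{0} for which the denominators x(pz) − x(z/p), x(p²z) − x(z) and x(z) − x(z/p²) are all nonzero, then λ = −(q^n − 1)·(2p·(q^n − q)·a + (q − 1)·(q^n + q)·d) / (2·q^n·(q − 1)²). -/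

import Mathlib

/-!
Compare growth at infinity. Write `g ~ L z^k` when `g z / z^k → L` as `z → ∞`. Since
`x(z) ~ z/2`, one gets `𝔻g ~ 2[k]_p L z^(k-1)` and `𝕊g ~ (p^k + p^(-k))/2 · L z^k` with
`[k]_p = (p^k - p^(-k))/(p - p⁻¹)`. As `y ~ lc(P)/2^n · z^n`, the left-hand side of the equation is
`~ (λ - λ_n) lc(P)/2^n · z^n` with `λ_n = qEigenvalue p a d n`, and it vanishes for all large `z`, so `λ = λ_n`.
-/

open Complex

/-- The q-quadratic lattice x(z) = (z + z⁻¹)/2. -/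
noncomputable def lat (z : ℂ) : ℂ := (z + z⁻¹) / 2

/-- Divided-difference operator on the q-quadratic lattice (p² = q). -/
noncomputable def Dq (p : ℂ) (g : ℂ → ℂ) (z : ℂ) : ℂ :=
  (g (p * z) - g (z / p)) / (lat (p * z) - lat (z / p))

/-- Averaging operator on the q-quadratic lattice (p² = q). -/
noncomputable def Sq (p : ℂ) (g : ℂ → ℂ) (z : ℂ) : ℂ :=
  (g (p * z) + g (z / p)) / 2

open Filter Topology Bornology Polynomial

section LeadingTerm

variable {𝕜 : Type*} [NontriviallyNormedField 𝕜] {f g : 𝕜 → 𝕜} {k m : ℤ} {L M : 𝕜}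

def HasLeadingTerm (f : 𝕜 → 𝕜) (k : ℤ) (L : 𝕜) : Prop :=
  Tendsto (fun z => f z / z ^ k) (cobounded 𝕜) (𝓝 L)

namespace HasLeadingTerm

theorem const (c : 𝕜) : HasLeadingTerm (fun _ => c) 0 c := by
  simp [HasLeadingTerm]

theorem const_mul (c : 𝕜) (hf : HasLeadingTerm f k L) :
    HasLeadingTerm (fun z => c * f z) k (c * L) := by
  simpa only [HasLeadingTerm, mul_div_assoc] using Tendsto.const_mul c hf

theorem add (hf : HasLeadingTerm f k L) (hg : HasLeadingTerm g k M) :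
    HasLeadingTerm (fun z => f z + g z) k (L + M) := by
  simpa only [HasLeadingTerm, add_div] using Tendsto.add hf hg

theorem sub (hf : HasLeadingTerm f k L) (hg : HasLeadingTerm g k M) :
    HasLeadingTerm (fun z => f z - g z) k (L - M) := by
  simpa only [HasLeadingTerm, sub_div] using Tendsto.sub hf hg

theorem sum {ι : Type*} (s : Finset ι) {f : ι → 𝕜 → 𝕜} {L : ι → 𝕜}
    (hf : ∀ i ∈ s, HasLeadingTerm (f i) k (L i)) :
    HasLeadingTerm (fun z => ∑ i ∈ s, f i z) k (∑ i ∈ s, L i) := by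
  simpa only [HasLeadingTerm, Finset.sum_div] using tendsto_finsetSum s hf

theorem mul (hf : HasLeadingTerm f k L) (hg : HasLeadingTerm g m M) :
    HasLeadingTerm (fun z => f z * g z) (k + m) (L * M) := by
  refine (Tendsto.mul hf hg).congr' ?_
  filter_upwards [eventually_ne_cobounded 0] with z hz
  rw [zpow_add₀ hz, mul_div_mul_comm]

theorem div (hf : HasLeadingTerm f k L) (hg : HasLeadingTerm g m M) (hM : M ≠ 0) :
    HasLeadingTerm (fun z => f z / g z) (k - m) (L / M) := by
  refine (Tendsto.div hf hg hM).congr' ?_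
  filter_upwards [eventually_ne_cobounded 0] with z hz
  rw [zpow_sub₀ hz, div_div_div_comm]
  rfl

theorem pow (hf : HasLeadingTerm f k L) (n : ℕ) :
    HasLeadingTerm (fun z => f z ^ n) (n * k) (L ^ n) := by
  induction n with
  | zero => simpa using const (1 : 𝕜)
  | succ n ih =>
    simpa only [pow_succ, Nat.cast_succ, add_mul, one_mul] using ih.mul hf

theorem of_lt (hf : HasLeadingTerm f k L) (hkm : k < m) : HasLeadingTerm f m 0 := by
  obtain ⟨j, rfl⟩ : ∃ j : ℕ, m = k + (j + 1 : ℕ) := ⟨(m - k - 1).toNat, by omega⟩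
  have hdecay : Tendsto (fun z : 𝕜 => z⁻¹ ^ (j + 1)) (cobounded 𝕜) (𝓝 0) := by
    simpa using (tendsto_inv₀_cobounded (α := 𝕜)).pow (j + 1)
  have hprod : Tendsto (fun z => z⁻¹ ^ (j + 1) * (f z / z ^ k)) (cobounded 𝕜) (𝓝 0) := by
    simpa using Tendsto.mul hdecay hf
  refine hprod.congr' ?_
  filter_upwards [eventually_ne_cobounded 0] with z hz
  rw [zpow_add₀ hz, zpow_natCast, inv_pow]
  field_simp

theorem comp_mul (hf : HasLeadingTerm f k L) {c : 𝕜} (hc : c ≠ 0) :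
    HasLeadingTerm (fun z => f (c * z)) k (c ^ k * L) := by
  refine ((hf.comp (tendsto_mul_left_cobounded hc)).const_mul (c ^ k)).congr' ?_
  filter_upwards with z
  rw [Function.comp_apply, mul_zpow]
  field_simp [zpow_ne_zero k hc]

theorem eventually_ne_zero (hf : HasLeadingTerm f k L) (hL : L ≠ 0) :
    ∀ᶠ z in cobounded 𝕜, f z ≠ 0 := by
  filter_upwards [hf.eventually_ne hL] with z hz hfz
  simp [hfz] at hz

theorem eq_zero_of_eventually_eq_zero (hf : HasLeadingTerm f k L)
    (h : ∀ᶠ z in cobounded 𝕜, f z = 0) : L = 0 := by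
  refine tendsto_nhds_unique hf (tendsto_const_nhds.congr' ?_)
  filter_upwards [h] with z hz
  simp [hz]

theorem eval_polynomial (hg : HasLeadingTerm g 1 M) {P : 𝕜[X]} {n : ℕ} (hn : P.natDegree ≤ n) :
    HasLeadingTerm (fun z => P.eval (g z)) n (P.coeff n * M ^ n) := by
  have hterm : ∀ i ∈ Finset.range (n + 1), HasLeadingTerm (fun z => P.coeff i * g z ^ i) n
      (if i = n then P.coeff n * M ^ n else 0) := by
    intro i hi
    have hmono := (hg.pow i).const_mul (P.coeff i)
    rw [mul_one] at hmono
    split_ifs with hin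
    · exact hin ▸ hmono
    · exact hmono.of_lt (by simp at hi; omega)
  simpa [eval_eq_sum_range' (Nat.lt_succ_of_le hn)] using sum _ hterm

end HasLeadingTerm

end LeadingTerm

theorem sub_inv_ne_zero {K : Type*} [Field K] {p : K} (hp : p ≠ 0) (hp1 : p ^ 2 ≠ 1) :
    p - p⁻¹ ≠ 0 := by
  rw [sub_ne_zero]
  intro h
  apply hp1
  field_simp at h
  linear_combination h

def qNum {K : Type*} [Field K] (p : K) (k : ℤ) : K := (p ^ k - p ^ (-k)) / (p - p⁻¹)

noncomputable def qEigenvalue (p a d : ℂ) (k : ℤ) : ℂ :=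
  -qNum p k * (a * qNum p (k - 1) + d * ((p ^ (k - 1) + p ^ (-(k - 1))) / 2))

theorem qEigenvalue_natCast {p : ℂ} (hp : p ≠ 0) (hp1 : p ^ 2 ≠ 1) (a d : ℂ) (n : ℕ) :
    qEigenvalue p a d n =
      -((p ^ 2) ^ n - 1) * (2 * p * ((p ^ 2) ^ n - p ^ 2) * a + (p ^ 2 - 1) * ((p ^ 2) ^ n + p ^ 2) * d)
        / (2 * (p ^ 2) ^ n * (p ^ 2 - 1) ^ 2) := by
  have hp1' : p ^ 2 - 1 ≠ 0 := sub_ne_zero.mpr hp1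
  have hpp := sub_inv_ne_zero hp hp1
  simp only [qEigenvalue, qNum, zpow_neg, zpow_sub₀ hp, zpow_natCast, zpow_one, neg_sub]
  field_simp
  ring

theorem hasLeadingTerm_lat : HasLeadingTerm lat 1 (1 / 2) := by
  have h : Tendsto (fun z : ℂ => (1 + z⁻¹ ^ 2) / 2) (cobounded ℂ) (𝓝 (1 / 2)) := by
    simpa using ((tendsto_inv₀_cobounded (α := ℂ)).pow 2).const_add 1 |>.div_const 2
  refine h.congr' ?_
  filter_upwards [eventually_ne_cobounded 0] with z hz
  simp only [lat, zpow_one]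
  field_simp

theorem hasLeadingTerm_lat_sub {c c' : ℂ} (hc : c ≠ 0) (hc' : c' ≠ 0) :
    HasLeadingTerm (fun z => lat (c * z) - lat (c' * z)) 1 ((c - c') / 2) := by
  convert (hasLeadingTerm_lat.comp_mul hc).sub (hasLeadingTerm_lat.comp_mul hc') using 1
  simp only [zpow_one]
  ring

section Lattice

variable {p : ℂ} {g : ℂ → ℂ} {k : ℤ} {L : ℂ}

theorem hasLeadingTerm_Dq (hg : HasLeadingTerm g k L) (hp : p ≠ 0) (hp1 : p ^ 2 ≠ 1) :
    HasLeadingTerm (Dq p g) (k - 1) (2 * qNum p k * L) := by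
  have hpp := sub_inv_ne_zero hp hp1
  have h := ((hg.comp_mul hp).sub (hg.comp_mul (inv_ne_zero hp))).div
    (hasLeadingTerm_lat_sub hp (inv_ne_zero hp)) (div_ne_zero hpp two_ne_zero)
  simp only [inv_mul_eq_div] at h
  rwa [show 2 * qNum p k * L = (p ^ k * L - p⁻¹ ^ k * L) / ((p - p⁻¹) / 2) by
    rw [qNum, inv_zpow']; field_simp]

theorem hasLeadingTerm_Sq (hg : HasLeadingTerm g k L) (hp : p ≠ 0) :
    HasLeadingTerm (Sq p g) k ((p ^ k + p ^ (-k)) / 2 * L) := by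
  have h := ((hg.comp_mul hp).add (hg.comp_mul (inv_ne_zero hp))).const_mul (1 / 2)
  simp only [inv_mul_eq_div] at h
  rw [show (p ^ k + p ^ (-k)) / 2 * L = 1 / 2 * (p ^ k * L + p⁻¹ ^ k * L) by
    rw [inv_zpow']; ring]
  rwa [show Sq p g = fun z => 1 / 2 * (g (p * z) + g (z / p)) by ext z; simp only [Sq]; ring]

theorem hasLeadingTerm_operator (hp : p ≠ 0) (hp1 : p ^ 2 ≠ 1) (a b c d e lambda : ℂ)
    (hg : HasLeadingTerm g k L) :
    HasLeadingTerm (fun z => (a * lat z ^ 2 + b * lat z + c) * Dq p (Dq p g) z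
      + (d * lat z + e) * Sq p (Dq p g) z + lambda * g z) k ((lambda - qEigenvalue p a d k) * L) := by
  have hquad : HasLeadingTerm (fun z => a * lat z ^ 2 + b * lat z + c) 2 (a * (1 / 2) ^ 2) := by
    simpa using ((hasLeadingTerm_lat.pow 2).const_mul a).add
      ((hasLeadingTerm_lat.const_mul b).of_lt one_lt_two) |>.add ((HasLeadingTerm.const c).of_lt two_pos)
  have hlin : HasLeadingTerm (fun z => d * lat z + e) 1 (d * (1 / 2)) := by
    simpa using (hasLeadingTerm_lat.const_mul d).add ((HasLeadingTerm.const e).of_lt one_pos)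
  have hDg := hasLeadingTerm_Dq hg hp hp1
  have h2 := hquad.mul (hasLeadingTerm_Dq hDg hp hp1)
  have h1 := hlin.mul (hasLeadingTerm_Sq hDg hp)
  rw [show 2 + (k - 1 - 1) = k by ring] at h2
  rw [show 1 + (k - 1) = k by ring] at h1
  convert (h2.add h1).add (hg.const_mul lambda) using 1
  simp only [qEigenvalue]
  ring

theorem eventually_lattice_sub_ne_zero (hp : p ≠ 0) (hp1 : p ^ 2 ≠ 1) :
    ∀ᶠ z in cobounded ℂ, z ≠ 0 ∧ lat (p * z) - lat (z / p) ≠ 0 ∧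
      lat (p ^ 2 * z) - lat z ≠ 0 ∧ lat z - lat (z / p ^ 2) ≠ 0 := by
  have hp2 : p ^ 2 ≠ 0 := pow_ne_zero 2 hp
  have h1 := hasLeadingTerm_lat_sub hp (inv_ne_zero hp)
  have h2 := hasLeadingTerm_lat_sub hp2 one_ne_zero
  have h3 := hasLeadingTerm_lat_sub one_ne_zero (inv_ne_zero hp2)
  simp only [inv_mul_eq_div, one_mul] at h1 h2 h3
  filter_upwards [eventually_ne_cobounded 0,
    h1.eventually_ne_zero (div_ne_zero (sub_inv_ne_zero hp hp1) two_ne_zero),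
    h2.eventually_ne_zero (div_ne_zero (sub_ne_zero.mpr hp1) two_ne_zero),
    h3.eventually_ne_zero (div_ne_zero (sub_ne_zero.mpr (by simpa [eq_comm] using hp1)) two_ne_zero)]
    with z h0 h1 h2 h3 using ⟨h0, h1, h2, h3⟩

end Lattice

theorem stmt_4 (q p : ℂ) (hq0 : q ≠ 0) (hqru : ∀ m : ℕ, 0 < m → q ^ m ≠ 1)
    (hp : p^2 = q) (a b c d e lambda : ℂ) (n : ℕ) (P : Polynomial ℂ)
    (hdeg : P.natDegree = n) (hlead : P.leadingCoeff ≠ 0)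
    (hde : ∀ z : ℂ, z ≠ 0 →
      lat (p * z) - lat (z / p) ≠ 0 →
      lat (p^2 * z) - lat z ≠ 0 →
      lat z - lat (z / p^2) ≠ 0 →
      (a * (lat z)^2 + b * lat z + c) * Dq p (Dq p (fun w => P.eval (lat w))) z
        + (d * lat z + e) * Sq p (Dq p (fun w => P.eval (lat w))) z
        + lambda * P.eval (lat z) = 0) :
    lambda = -(q^n - 1) * (2*p*(q^n - q)*a + (q - 1)*(q^n + q)*d) / (2 * q^n * (q - 1)^2) := by
  subst hp
  have hp0 : p ≠ 0 := by rintro rfl; simp at hq0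
  have hp1 : p ^ 2 ≠ 1 := by simpa using hqru 1 one_pos
  have hy : HasLeadingTerm (fun z => P.eval (lat z)) n (P.leadingCoeff * (1 / 2) ^ n) := by
    simpa [← hdeg] using hasLeadingTerm_lat.eval_polynomial hdeg.le
  have hlimit := (hasLeadingTerm_operator hp0 hp1 a b c d e lambda hy).eq_zero_of_eventually_eq_zero
    ((eventually_lattice_sub_ne_zero hp0 hp1).mono fun z ⟨h0, h1, h2, h3⟩ => hde z h0 h1 h2 h3)
  have hL0 : P.leadingCoeff * (1 / 2) ^ n ≠ 0 := by simpa using hlead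
  rw [← qEigenvalue_natCast hp0 hp1, ← sub_eq_zero]
  exact (mul_eq_zero.mp hlimit).resolve_right hL0
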